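/- Let Δ be a d_1-convex union representable simplicial complex, and let Γ be a d_2-representable simplicial complex on a vertex set disjoint from that of Δ. Then the join Δ * Γ = {σ ∪ τ : σ ∈ Δ, τ ∈ Γ} is (d_1 + d_2)-convex union representable. -/

import Mathlib

open Set

/-- An abstract simplicial complex on ground set `V`: a collection of finite
subsets of `V` that is closed under inclusion. -/
def IsSimplicialComplex {V : Type*} (Δ : Set (Finset V)) : Prop :=
  ∀ σ ∈ Δ, ∀ τ : Finset V, τ ⊆ σ → τ ∈ Δ

/-- The nerve of a collection of sets `U i`: the faces are the finite sets `σ`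
of indices such that `⋂ i ∈ σ, U i ≠ ∅`, where by convention the empty face
belongs to the nerve iff some `U i` is nonempty. -/
def nerveOf {V E : Type*} (U : V → Set E) : Set (Finset V) :=
  {σ | (∃ i, (U i).Nonempty) ∧ ∃ x, ∀ i ∈ σ, x ∈ U i}

/-- A facet of `Δ` is an inclusion-maximal face. -/
def IsFacet {V : Type*} (Δ : Set (Finset V)) (σ : Finset V) : Prop :=
  σ ∈ Δ ∧ ∀ τ ∈ Δ, σ ⊆ τ → τ = σ

/-- A free face of `Δ`: a face that is not a facet and is contained in a
unique facet. -/
def IsFreeFace {V : Type*} (Δ : Set (Finset V)) (σ : Finset V) : Prop :=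
  σ ∈ Δ ∧ ¬ IsFacet Δ σ ∧ ∃! τ : Finset V, IsFacet Δ τ ∧ σ ⊆ τ

/-- An elementary collapse removes from `Δ` all faces containing a free face. -/
def ElemCollapse {V : Type*} (Δ Γ : Set (Finset V)) : Prop :=
  ∃ σ : Finset V, IsFreeFace Δ σ ∧ Γ = {τ ∈ Δ | ¬ σ ⊆ τ}

/-- `Δ` collapses onto `Γ` if a (finite) sequence of elementary collapses
leads from `Δ` to `Γ`. -/
def CollapsesTo {V : Type*} (Δ Γ : Set (Finset V)) : Prop :=
  Relation.ReflTransGen ElemCollapse Δ Γ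

/-- `Δ` is collapsible if it collapses onto the void complex. -/
def Collapsible {V : Type*} (Δ : Set (Finset V)) : Prop :=
  CollapsesTo Δ (∅ : Set (Finset V))

/-- Euclidean space `ℝ^d`. -/
abbrev Euc (d : ℕ) : Type := EuclideanSpace ℝ (Fin d)

/-- `U` is a `d`-convex union representation of `Δ`: the `U i` are convex open
sets in `ℝ^d`, their union is convex, and their nerve is `Δ`. -/
def IsCURep {V : Type*} {d : ℕ} (U : V → Set (Euc d)) (Δ : Set (Finset V)) : Prop :=
  (∀ i, Convex ℝ (U i)) ∧ (∀ i, IsOpen (U i)) ∧ Convex ℝ (⋃ i, U i) ∧ nerveOf U = Δ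

/-- `Δ` is `d`-convex union representable. -/
def IsCUR {V : Type*} (d : ℕ) (Δ : Set (Finset V)) : Prop :=
  ∃ U : V → Set (Euc d), IsCURep U Δ

/-- `Δ` is convex union representable: `d`-convex union representable for some `d`. -/
def ConvexUnionRepresentable {V : Type*} (Δ : Set (Finset V)) : Prop :=
  ∃ d : ℕ, IsCUR d Δ

/-- `Δ` is `d`-representable: the nerve of a family of convex sets in `ℝ^d`. -/
def IsRep {V : Type*} (d : ℕ) (Δ : Set (Finset V)) : Prop :=
  ∃ U : V → Set (Euc d), (∀ i, Convex ℝ (U i)) ∧ nerveOf U = Δ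

/-- The join of two complexes on disjoint vertex sets:
`Δ * Γ = {σ ∪ τ : σ ∈ Δ, τ ∈ Γ}`. -/
def joinCplx {V W : Type*} [DecidableEq V] [DecidableEq W]
    (Δ : Set (Finset V)) (Γ : Set (Finset W)) : Set (Finset (V ⊕ W)) :=
  {σ | ∃ τ₁ ∈ Δ, ∃ τ₂ ∈ Γ, σ = τ₁.image Sum.inl ∪ τ₂.image Sum.inr}

/-!
Given a convex union representation `U` of `Δ` in `ℝ^{d₁}` and open convex sets `T` in `ℝ^{d₂}`
with nerve `Γ`, take the sets `U i × ℝ^{d₂}` and `(⋃ U) × T j` in `ℝ^{d₁} × ℝ^{d₂}`. Their union is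
the convex set `(⋃ U) × ℝ^{d₂}`, and some of them share a point exactly when their indices from
`U` form a face of `Δ` and those from `T` a face of `Γ`.

Open convex sets with nerve `Γ` exist whenever convex ones do: replace the `i`-th set by the
convex hull of one common point chosen for each face containing `i`, which is compact, and thicken
these hulls by an `ε` small enough that no intersection belonging to a non-face becomes nonempty.
-/

open Metric Filter Topology

section Nerve

variable {V E : Type*}

theorem mem_nerveOf_iff {U : V → Set E} {σ : Finset V} :
    σ ∈ nerveOf U ↔ ∃ x ∈ ⋃ i, U i, ∀ i ∈ σ, x ∈ U i := by
  constructor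
  · rintro ⟨⟨i, y, hy⟩, x, hx⟩
    by_cases hσ : σ.Nonempty
    · obtain ⟨j, hj⟩ := hσ
      exact ⟨x, mem_iUnion.2 ⟨j, hx j hj⟩, hx⟩
    · rw [Finset.not_nonempty_iff_eq_empty.1 hσ]
      exact ⟨y, mem_iUnion.2 ⟨i, hy⟩, by simp⟩
  · rintro ⟨x, hxU, hx⟩
    obtain ⟨i, hi⟩ := mem_iUnion.1 hxU
    exact ⟨⟨i, x, hi⟩, x, hx⟩

theorem nerveOf_eq_of_subset {U U' : V → Set E} (hUU' : ∀ i, U i ⊆ U' i)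
    (h : ∀ σ ∈ nerveOf U', ∃ x, ∀ i ∈ σ, x ∈ U i) : nerveOf U = nerveOf U' := by
  ext σ
  refine ⟨fun ⟨⟨i, hi⟩, x, hx⟩ => ⟨⟨i, hi.mono (hUU' i)⟩, x, fun j hj => hUU' j (hx j hj)⟩,
    fun hσ => ⟨?_, h σ hσ⟩⟩
  obtain ⟨i, y, hy⟩ := hσ.1
  obtain ⟨x, hx⟩ := h {i} ⟨⟨i, y, hy⟩, y, by simpa using hy⟩
  exact ⟨i, x, hx i (Finset.mem_singleton_self i)⟩

theorem nerveOf_preimage {E' : Type*} {f : E' → E} (hf : Function.Surjective f) (U : V → Set E) :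
    nerveOf (fun i => f ⁻¹' U i) = nerveOf U := by
  ext σ
  simp only [nerveOf, mem_ofPred_eq, hf.nonempty_preimage, mem_preimage, hf.exists]

end Nerve

theorem mem_joinCplx_iff {V W : Type*} [DecidableEq V] [DecidableEq W]
    {Δ : Set (Finset V)} {Γ : Set (Finset W)} {σ : Finset (V ⊕ W)} :
    σ ∈ joinCplx Δ Γ ↔ σ.toLeft ∈ Δ ∧ σ.toRight ∈ Γ := by
  have image_union (τ₁ : Finset V) (τ₂ : Finset W) :
      τ₁.image Sum.inl ∪ τ₂.image Sum.inr = τ₁.disjSum τ₂ := by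
    ext (x | x) <;> simp
  simp only [joinCplx, mem_ofPred_eq, image_union, Finset.eq_disjSum_iff]
  constructor
  · rintro ⟨τ₁, h₁, τ₂, h₂, rfl, rfl⟩
    exact ⟨h₁, h₂⟩
  · rintro ⟨h₁, h₂⟩
    exact ⟨_, h₁, _, h₂, rfl, rfl⟩

theorem joinCplx_empty_right {V W : Type*} [DecidableEq V] [DecidableEq W]
    (Δ : Set (Finset V)) : joinCplx Δ (∅ : Set (Finset W)) = ∅ := by
  simp [joinCplx]

section Thickening

variable {ι E : Type*}

theorem eventually_iInter_thickening_eq_empty [MetricSpace E] [Fintype ι] {K : ι → Set E}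
    (hK : ∀ i, IsCompact (K i)) (h : ⋂ i, K i = ∅) :
    ∀ᶠ ε in 𝓝[>] 0, ⋂ i, thickening ε (K i) = ∅ := by
  rcases isEmpty_or_nonempty ι with hι | ⟨⟨i₀⟩⟩
  · exact .of_forall fun _ => by simpa using h
  -- The tuples in `∏ i, K i` stay a positive distance away from the closed diagonal of `E^ι`.
  set D : Set (ι → E) := ⋂ i, ⋂ j, {y | y i = y j}
  have hD : IsClosed D :=
    isClosed_iInter fun i => isClosed_iInter fun j =>
      isClosed_eq (continuous_apply i) (continuous_apply j)
  have hKD : univ.pi K ⊆ Dᶜ := by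
    intro y hy hyD
    have hyK : y i₀ ∈ ⋂ i, K i :=
      mem_iInter.2 fun i => (mem_iInter₂.1 hyD i₀ i).symm ▸ hy i (mem_univ i)
    simp [h] at hyK
  obtain ⟨δ, hδ, hδD⟩ := (isCompact_univ_pi hK).exists_thickening_subset_open hD.isOpen_compl hKD
  filter_upwards [Ioo_mem_nhdsGT hδ] with ε hε
  refine eq_empty_of_forall_notMem fun x hx => ?_
  have : ∀ i, ∃ y ∈ K i, dist x y < δ := fun i =>
    mem_thickening_iff.1 (thickening_mono hε.2.le _ (mem_iInter.1 hx i))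
  choose y hyK hy using this
  refine hδD (mem_thickening_iff.2 ⟨y, fun i _ => hyK i, ?_⟩) (by simp [D] : Function.const ι x ∈ D)
  exact (dist_pi_lt_iff hδ).2 hy

theorem eventually_nerveOf_thickening_eq [MetricSpace E] [Finite ι] {K : ι → Set E}
    (hK : ∀ i, IsCompact (K i)) :
    ∀ᶠ ε in 𝓝[>] 0, nerveOf (fun i => thickening ε (K i)) = nerveOf K := by
  have hface (σ : Finset ι) : ∀ᶠ ε in 𝓝[>] (0 : ℝ),
      (∃ x, ∀ i ∈ σ, x ∈ thickening ε (K i)) → ∃ x, ∀ i ∈ σ, x ∈ K i := by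
    by_cases hσ : ∃ x, ∀ i ∈ σ, x ∈ K i
    · exact .of_forall fun _ _ => hσ
    have hempty : ⋂ i : σ, K i = ∅ := by simpa [eq_empty_iff_forall_notMem] using hσ
    filter_upwards [eventually_iInter_thickening_eq_empty (fun i : σ => hK i) hempty]
      with ε hε ⟨x, hx⟩
    exact absurd (hε ▸ mem_iInter.2 fun i : σ => hx i i.2) (notMem_empty x)
  filter_upwards [eventually_all.2 hface, self_mem_nhdsWithin] with ε hε (hε0 : 0 < ε)
  exact (nerveOf_eq_of_subset (fun i => self_subset_thickening hε0 _) fun σ hσ => hε σ hσ.2).symm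

end Thickening

section OpenRepresentation

variable {ι E : Type*} [Finite ι]

theorem exists_isCompact_convex_nerveOf_eq [AddCommGroup E] [Module ℝ E] [TopologicalSpace E]
    [IsTopologicalAddGroup E] [ContinuousSMul ℝ E] {W : ι → Set E} (hW : ∀ i, Convex ℝ (W i)) :
    ∃ K : ι → Set E, (∀ i, IsCompact (K i)) ∧ (∀ i, Convex ℝ (K i)) ∧ nerveOf K = nerveOf W := by
  choose! p hp using fun σ (hσ : σ ∈ nerveOf W) => hσ.2
  let K i := convexHull ℝ (p '' {σ | σ ∈ nerveOf W ∧ i ∈ σ})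
  refine ⟨K, fun i => (toFinite _).isCompact_convexHull ℝ, fun i => convex_convexHull ℝ _,
    nerveOf_eq_of_subset (fun i => convexHull_min ?_ (hW i))
      fun σ hσ => ⟨p σ, fun i hi => subset_convexHull ℝ _ ⟨σ, ⟨hσ, hi⟩, rfl⟩⟩⟩
  rintro _ ⟨σ, ⟨hσ, hi⟩, rfl⟩
  exact hp σ hσ i hi

theorem exists_isOpen_convex_nerveOf_eq [NormedAddCommGroup E] [NormedSpace ℝ E]
    {W : ι → Set E} (hW : ∀ i, Convex ℝ (W i)) :
    ∃ T : ι → Set E, (∀ i, IsOpen (T i)) ∧ (∀ i, Convex ℝ (T i)) ∧ nerveOf T = nerveOf W := by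
  obtain ⟨K, hKc, hKconv, hKW⟩ := exists_isCompact_convex_nerveOf_eq hW
  obtain ⟨ε, hε⟩ := (eventually_nerveOf_thickening_eq hKc).exists
  exact ⟨fun i => thickening ε (K i), fun _ => isOpen_thickening,
    fun i => (hKconv i).thickening ε, hε.trans hKW⟩

end OpenRepresentation

section Join

variable {V W E F : Type*}

def joinFamily (U : V → Set E) (T : W → Set F) : V ⊕ W → Set (E × F) :=
  Sum.elim (fun i => U i ×ˢ univ) (fun j => (⋃ i, U i) ×ˢ T j)

variable {U : V → Set E} {T : W → Set F}

theorem iUnion_joinFamily : ⋃ k, joinFamily U T k = (⋃ i, U i) ×ˢ univ := by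
  simp only [joinFamily, iUnion_sum, Sum.elim_inl, Sum.elim_inr, ← iUnion_prod_const]
  exact union_eq_left.2 (iUnion_subset fun j => prod_mono subset_rfl (subset_univ _))

theorem nerveOf_joinFamily [DecidableEq V] [DecidableEq W] (hT : ∃ j, (T j).Nonempty) :
    nerveOf (joinFamily U T) = joinCplx (nerveOf U) (nerveOf T) := by
  ext σ
  rw [mem_joinCplx_iff, mem_nerveOf_iff (U := joinFamily U T), mem_nerveOf_iff (U := U),
    iUnion_joinFamily, nerveOf, mem_ofPred_eq, and_iff_right hT]
  simp only [Sum.forall, joinFamily, Sum.elim_inl, Sum.elim_inr, mem_prod, mem_univ, and_true,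
    Prod.exists, Finset.mem_toLeft, Finset.mem_toRight]
  constructor
  · rintro ⟨a, b, ha, haU, hbT⟩
    exact ⟨⟨a, ha, haU⟩, b, fun j hj => (hbT j hj).2⟩
  · rintro ⟨⟨a, ha, haU⟩, b, hbT⟩
    exact ⟨a, b, ha, haU, fun j hj => ⟨ha, hbT j hj⟩⟩

theorem convex_joinFamily [AddCommGroup E] [Module ℝ E] [AddCommGroup F] [Module ℝ F]
    (hU : ∀ i, Convex ℝ (U i)) (hUunion : Convex ℝ (⋃ i, U i)) (hT : ∀ j, Convex ℝ (T j))
    (k : V ⊕ W) : Convex ℝ (joinFamily U T k) := by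
  rcases k with i | j
  · exact (hU i).prod convex_univ
  · exact hUunion.prod (hT j)

variable [TopologicalSpace E] [TopologicalSpace F]

theorem isOpen_joinFamily (hU : ∀ i, IsOpen (U i)) (hT : ∀ j, IsOpen (T j)) (k : V ⊕ W) :
    IsOpen (joinFamily U T k) := by
  rcases k with i | j
  · exact (hU i).prod isOpen_univ
  · exact (isOpen_iUnion hU).prod (hT j)

end Join

theorem isCURep_preimage {V E : Type*} {d : ℕ} [TopologicalSpace E] [AddCommGroup E]
    [Module ℝ E] (e : Euc d ≃L[ℝ] E) {U : V → Set E} (hconv : ∀ i, Convex ℝ (U i))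
    (hopen : ∀ i, IsOpen (U i)) (hunion : Convex ℝ (⋃ i, U i)) :
    IsCURep (fun i => e ⁻¹' U i) (nerveOf U) := by
  refine ⟨fun i => (hconv i).linear_preimage e.toLinearEquiv.toLinearMap,
    fun i => (hopen i).preimage e.continuous, ?_, nerveOf_preimage e.surjective U⟩
  rw [← preimage_iUnion]
  exact hunion.linear_preimage e.toLinearEquiv.toLinearMap

theorem isCUR_empty {V : Type*} (d : ℕ) : IsCUR d (∅ : Set (Finset V)) :=
  ⟨fun _ => ∅, fun _ => convex_empty, fun _ => isOpen_empty, by simp [convex_empty],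
    by simp [nerveOf]⟩

theorem join_CUR_general {n₁ n₂ d₁ d₂ : ℕ}
    (Δ : Set (Finset (Fin n₁))) (Γ : Set (Finset (Fin n₂)))
    (hcur : IsCUR d₁ Δ) (hrep : IsRep d₂ Γ) :
    IsCUR (d₁ + d₂) (joinCplx Δ Γ) := by
  obtain ⟨U, hUconv, hUopen, hUunion, rfl⟩ := hcur
  obtain ⟨W, hWconv, rfl⟩ := hrep
  obtain ⟨T, hTopen, hTconv, hTW⟩ := exists_isOpen_convex_nerveOf_eq hWconv
  rcases (nerveOf W).eq_empty_or_nonempty with hΓ | ⟨σ, hσ⟩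
  · rw [hΓ, joinCplx_empty_right]
    exact isCUR_empty _
  have hT : ∃ j, (T j).Nonempty := (hTW ▸ hσ).1
  let e : Euc (d₁ + d₂) ≃L[ℝ] Euc d₁ × Euc d₂ :=
    (LinearEquiv.ofFinrankEq _ _ (by simp)).toContinuousLinearEquiv
  rw [← hTW, ← nerveOf_joinFamily hT]
  refine ⟨_, isCURep_preimage e (convex_joinFamily hUconv hUunion hTconv)
    (isOpen_joinFamily hUopen hTopen) ?_⟩
  rw [iUnion_joinFamily]
  exact hUunion.prod convex_univ

/-- **Proposition.** If `Δ` is `d₁`-convex union representable and `Γ` is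
`d₂`-representable, then the join `Δ * Γ` is `(d₁ + d₂)`-convex union
representable. -/
theorem join_CUR {n₁ n₂ d₁ d₂ : ℕ}
    (Δ : Set (Finset (Fin n₁))) (Γ : Set (Finset (Fin n₂)))
    (hΔ : IsSimplicialComplex Δ) (hΓ : IsSimplicialComplex Γ)
    (hcur : IsCUR d₁ Δ) (hrep : IsRep d₂ Γ) :
    IsCUR (d₁ + d₂) (joinCplx Δ Γ) :=
  join_CUR_general Δ Γ hcur hrep
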